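/- arXiv:2003.10191 — 6 statements merged into one kernel-verified Lean document; each statement's English description precedes it below -/
import Mathlib

section
/- The number of monic polynomials g ∈ ℤ[x] of degree 6 such that g is a product of cyclotomic polynomials, g(0) = 1, g has no common root with f(x) = (x−1)^6 (equivalently g(1) ≠ 0), and the pair (f, g) is a primitive pair, is exactly 40. -/
open Polynomial

/-!
Since `Φ₁ = X - 1`, the condition `g(1) ≠ 0` says exactly that `Φ₁` is not a factor of `g`, and
then `g(0) = 1` holds automatically. The pair is always primitive, because `(X - 1)⁶` has nonzero
coefficients in the coprime degrees `5` and `6`. By unique factorisation, such `g` correspond to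
the multisets of indices `m ≥ 2` with `∑ φ(m) = 6`. Every prime power `q ∣ m` then has
`φ(q) ≤ 6`, hence `q ∣ 2520`, which leaves `m ∈ {2, 3, 4, 5, 6, 7, 8, 9, 10, 12, 14, 18}`;
enumerating the multisets of these indices with totient sum `6` gives `40`.
-/

/-- `p` is a (finite, possibly repeated) product of cyclotomic polynomials `Φ_m`. -/
def IsCyclotomicProduct (p : Polynomial ℤ) : Prop :=
  ∃ s : Multiset ℕ, (∀ m ∈ s, 0 < m) ∧ p = (s.map fun m => Polynomial.cyclotomic m ℤ).prod

/-- `f, g` form a primitive pair: there are no `f₁, g₁ ∈ ℤ[x]` and `k ≥ 2` with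
`f(x) = f₁(x^k)` and `g(x) = g₁(x^k)`. -/
def IsPrimitivePair (f g : Polynomial ℤ) : Prop :=
  ¬ ∃ (k : ℕ) (f₁ g₁ : Polynomial ℤ), 2 ≤ k ∧
    f = f₁.comp (Polynomial.X ^ k) ∧ g = g₁.comp (Polynomial.X ^ k)

def multisetsOfWeight {α : Type*} [DecidableEq α] (w : α → ℕ) : List α → ℕ → Finset (Multiset α)
  | [], n => if n = 0 then {0} else ∅
  | a :: l, n => (Finset.range (n / w a + 1)).biUnion fun k =>
      (multisetsOfWeight w l (n - k * w a)).image (Multiset.replicate k a + ·)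

theorem mem_multisetsOfWeight {α : Type*} [DecidableEq α] {w : α → ℕ} {l : List α}
    (hw : ∀ a ∈ l, 0 < w a) {n : ℕ} {s : Multiset α} :
    s ∈ multisetsOfWeight w l n ↔ (∀ x ∈ s, x ∈ l) ∧ (s.map w).sum = n := by
  induction l generalizing n s with
  | nil =>
    cases n <;> simp [multisetsOfWeight, ← Multiset.eq_zero_iff_forall_notMem] <;>
      rintro rfl <;> simp
  | cons a l ih =>
    simp only [List.forall_mem_cons] at hw
    simp only [multisetsOfWeight, Finset.mem_biUnion, Finset.mem_range, Finset.mem_image,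
      ih hw.2, List.mem_cons, Nat.lt_succ_iff]
    constructor
    · rintro ⟨k, hk, t, ⟨htl, htw⟩, rfl⟩
      have : k * w a ≤ n := (Nat.le_div_iff_mul_le hw.1).mp hk
      refine ⟨fun x hx => ?_, ?_⟩
      · rcases Multiset.mem_add.mp hx with hx | hx
        · exact .inl (Multiset.eq_of_mem_replicate hx)
        · exact .inr (htl x hx)
      · simp only [Multiset.map_add, Multiset.map_replicate, Multiset.sum_add,
          Multiset.sum_replicate, smul_eq_mul, htw]
        omega
    · rintro ⟨hsl, rfl⟩
      have hsplit := Multiset.filter_add_not (· = a) s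
      rw [Multiset.filter_eq'] at hsplit
      have hsum : s.count a * w a + ((s.filter (· ≠ a)).map w).sum = (s.map w).sum := by
        conv_rhs => rw [← hsplit]
        simp [Multiset.sum_replicate]
      refine ⟨s.count a, ?_, s.filter (· ≠ a), ⟨fun x hx => ?_, by omega⟩, hsplit⟩
      · exact (Nat.le_div_iff_mul_le hw.1).2 (hsum ▸ Nat.le_add_right _ _)
      · obtain ⟨hxs, hxa⟩ := Multiset.mem_filter.mp hx
        exact (hsl x hxs).resolve_left hxa

theorem Nat.dvd_2520_of_totient_le_six {m : ℕ} (hm : m ≠ 0) (h : m.totient ≤ 6) : m ∣ 2520 := by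
  rw [Nat.dvd_iff_prime_pow_dvd_dvd]
  intro p k hp hpk
  have hk : (p ^ k).totient ≤ 6 :=
    (Nat.le_of_dvd (Nat.totient_pos.2 (Nat.pos_of_ne_zero hm)) (Nat.totient_dvd_of_dvd hpk)).trans h
  cases k with
  | zero => exact one_dvd _
  | succ j =>
    rw [Nat.totient_prime_pow_succ hp] at hk
    have hp8 : p < 8 := by
      have := (Nat.le_mul_of_pos_left (p - 1) (pow_pos hp.pos j)).trans hk
      omega
    have hj7 : j < 7 := by
      have := (Nat.lt_pow_self hp.one_lt).trans_le
        ((Nat.le_mul_of_pos_right _ (Nat.sub_pos_of_lt hp.one_lt)).trans hk)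
      omega
    exact (by decide : ∀ p < 8, ∀ j < 7, p.Prime → p ^ j * (p - 1) ≤ 6 → p ^ (j + 1) ∣ 2520)
      p hp8 j hj7 hp hk

set_option maxRecDepth 4000 in
theorem Nat.two_le_and_totient_le_six_iff {m : ℕ} :
    2 ≤ m ∧ m.totient ≤ 6 ↔ m ∈ [2, 3, 4, 5, 6, 7, 8, 9, 10, 12, 14, 18] := by
  constructor
  · rintro ⟨h2, h6⟩
    have hm : m ∈ Nat.divisors 2520 :=
      Nat.mem_divisors.2 ⟨Nat.dvd_2520_of_totient_le_six (by omega) h6, by norm_num⟩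
    exact (by decide : ∀ d ∈ Nat.divisors 2520, 2 ≤ d → d.totient ≤ 6 →
      d ∈ [2, 3, 4, 5, 6, 7, 8, 9, 10, 12, 14, 18]) m hm h2 h6
  · exact (by decide : ∀ d ∈ [2, 3, 4, 5, 6, 7, 8, 9, 10, 12, 14, 18], 2 ≤ d ∧ d.totient ≤ 6) m

theorem isPrimitivePair_of_coeff_ne_zero {f : ℤ[X]} {i j : ℕ} (hij : i.Coprime j)
    (hi : f.coeff i ≠ 0) (hj : f.coeff j ≠ 0) (g : ℤ[X]) : IsPrimitivePair f g := by
  rintro ⟨k, f₁, -, hk, rfl, -⟩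
  have hk0 : 0 < k := by omega
  have hdvd : ∀ {n}, (f₁.comp (X ^ k)).coeff n ≠ 0 → k ∣ n := fun hn => by
    rw [← expand_eq_comp_X_pow, coeff_expand hk0] at hn
    exact of_not_not fun h => hn (if_neg h)
  have : k = 1 := Nat.dvd_one.1 (hij ▸ Nat.dvd_gcd (hdvd hi) (hdvd hj))
  omega

theorem isPrimitivePair_X_sub_one_pow {n : ℕ} (hn : n ≠ 0) (g : ℤ[X]) :
    IsPrimitivePair ((X - 1) ^ n) g := by
  have hcoeff : ∀ k ≤ n, ((X - 1 : ℤ[X]) ^ n).coeff k ≠ 0 := fun k hk => by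
    rw [sub_eq_add_neg, ← C_1, ← C_neg, coeff_X_add_C_pow]
    exact mul_ne_zero (pow_ne_zero _ (by norm_num)) (by exact_mod_cast (Nat.choose_pos hk).ne')
  exact isPrimitivePair_of_coeff_ne_zero
    ((Nat.coprime_self_sub_left (by omega)).2 (Nat.coprime_one_left n))
    (hcoeff _ (Nat.sub_le n 1)) (hcoeff n le_rfl) g

section CyclotomicProd

variable (R : Type*) [CommRing R]

noncomputable def cyclotomicProd (s : Multiset ℕ) : R[X] :=
  (s.map fun m => cyclotomic m R).prod

variable {R}

theorem monic_cyclotomicProd (s : Multiset ℕ) : (cyclotomicProd R s).Monic :=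
  monic_multiset_prod_of_monic _ _ fun m _ => cyclotomic.monic m R

theorem natDegree_cyclotomicProd [Nontrivial R] (s : Multiset ℕ) :
    (cyclotomicProd R s).natDegree = (s.map Nat.totient).sum := by
  rw [cyclotomicProd, natDegree_multiset_prod_of_monic _ fun f hf => ?_, Multiset.map_map]
  · simp only [Function.comp_def, natDegree_cyclotomic]
  · obtain ⟨m, -, rfl⟩ := Multiset.mem_map.1 hf
    exact cyclotomic.monic m R

theorem coeff_zero_cyclotomicProd {s : Multiset ℕ} (hs : 1 ∉ s) :
    (cyclotomicProd R s).coeff 0 = 1 := by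
  rw [cyclotomicProd, coeff_zero_eq_eval_zero, eval_multiset_prod, Multiset.map_map]
  refine Multiset.prod_eq_one fun x hx => ?_
  obtain ⟨m, hm, rfl⟩ := Multiset.mem_map.1 hx
  rcases Nat.lt_or_gt_of_ne (ne_of_mem_of_not_mem hm hs) with h | h
  · simp [Nat.lt_one_iff.1 h]
  · simp [← coeff_zero_eq_eval_zero, cyclotomic_coeff_zero R h]

theorem eval_one_cyclotomic_eq_zero_iff [IsDomain R] [CharZero R] {n : ℕ} :
    (cyclotomic n R).eval 1 = 0 ↔ n = 1 := by
  rcases n.eq_zero_or_pos with rfl | hn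
  · simp
  · rw [← IsRoot.def, isRoot_cyclotomic_iff_charZero hn, IsPrimitiveRoot.one_left_iff]

theorem eval_one_cyclotomicProd_eq_zero_iff [IsDomain R] [CharZero R] {s : Multiset ℕ} :
    (cyclotomicProd R s).eval 1 = 0 ↔ 1 ∈ s := by
  simp [cyclotomicProd, eval_multiset_prod, Multiset.prod_eq_zero_iff,
    eval_one_cyclotomic_eq_zero_iff]

end CyclotomicProd

theorem cyclotomicProd_injOn : Set.InjOn (cyclotomicProd ℤ) {s | ∀ m ∈ s, 0 < m} := by
  intro s hs t ht h
  have hirr : ∀ u : Multiset ℕ, (∀ m ∈ u, 0 < m) → ∀ p ∈ u.map fun m => cyclotomic m ℤ,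
      Irreducible p := fun u hu p hp => by
    obtain ⟨m, hm, rfl⟩ := Multiset.mem_map.1 hp
    exact cyclotomic.irreducible (hu m hm)
  have hrel := UniqueFactorizationMonoid.factors_unique (hirr s hs) (hirr t ht) (.of_eq h)
  rw [Multiset.rel_map] at hrel
  exact Multiset.rel_eq.1 <| hrel.mono fun a _ b _ hab => cyclotomic_injective <|
    eq_of_monic_of_associated (cyclotomic.monic a ℤ) (cyclotomic.monic b ℤ) hab

theorem ncard_multisets_totient_sum_six :
    {s : Multiset ℕ | (∀ m ∈ s, 2 ≤ m) ∧ (s.map Nat.totient).sum = 6}.ncard = 40 := by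
  have hset : {s : Multiset ℕ | (∀ m ∈ s, 2 ≤ m) ∧ (s.map Nat.totient).sum = 6} =
      multisetsOfWeight Nat.totient [2, 3, 4, 5, 6, 7, 8, 9, 10, 12, 14, 18] 6 := by
    ext s
    rw [Finset.mem_coe, mem_multisetsOfWeight (by decide)]
    simp only [Set.mem_ofPred_eq, ← Nat.two_le_and_totient_le_six_iff]
    constructor
    · rintro ⟨h2, hsum⟩
      exact ⟨fun m hm => ⟨h2 m hm, hsum ▸ Multiset.le_sum_of_mem (Multiset.mem_map_of_mem _ hm)⟩,
        hsum⟩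
    · rintro ⟨h, hsum⟩
      exact ⟨fun m hm => (h m hm).1, hsum⟩
  rw [hset, Set.ncard_coe_finset]
  decide

theorem setOf_cyclotomicProduct_eq_image {n : ℕ} (hn : n ≠ 0) :
    {g : ℤ[X] | g.Monic ∧ g.natDegree = n ∧ IsCyclotomicProduct g ∧ g.coeff 0 = 1 ∧
      g.eval 1 ≠ 0 ∧ IsPrimitivePair ((X - 1) ^ n) g} =
      cyclotomicProd ℤ '' {s | (∀ m ∈ s, 2 ≤ m) ∧ (s.map Nat.totient).sum = n} := by
  ext g
  constructor
  · rintro ⟨-, hdeg, ⟨s, hpos, rfl⟩, -, h1, -⟩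
    have h2 : ∀ m ∈ s, 2 ≤ m := fun m hm => by
      have : m ≠ 1 := fun h => h1 (eval_one_cyclotomicProd_eq_zero_iff.2 (h ▸ hm))
      have := hpos m hm
      omega
    exact ⟨s, ⟨h2, (natDegree_cyclotomicProd s).symm.trans hdeg⟩, rfl⟩
  · rintro ⟨s, ⟨h2, hsum⟩, rfl⟩
    have h1 : 1 ∉ s := fun h => absurd (h2 1 h) (by norm_num)
    exact ⟨monic_cyclotomicProd s, (natDegree_cyclotomicProd s).trans hsum,
      ⟨s, fun m hm => (h2 m hm).trans_lt' two_pos, rfl⟩, coeff_zero_cyclotomicProd h1,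
      mt eval_one_cyclotomicProd_eq_zero_iff.1 h1, isPrimitivePair_X_sub_one_pow hn _⟩

/-- there are exactly `40` monic degree-six products of cyclotomic polynomials
`g` with `g(0) = 1`, `g(1) ≠ 0` (i.e. no common root with `f = (x-1)^6`), such that
`(f, g)` is a primitive pair. -/
theorem count_forty :
    {g : Polynomial ℤ | g.Monic ∧ g.natDegree = 6 ∧ IsCyclotomicProduct g ∧
      g.coeff 0 = 1 ∧ g.eval 1 ≠ 0 ∧
      IsPrimitivePair ((Polynomial.X - 1) ^ 6) g}.ncard = 40 := by
  have hinj : Set.InjOn (cyclotomicProd ℤ)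
      {s | (∀ m ∈ s, 2 ≤ m) ∧ (s.map Nat.totient).sum = 6} :=
    cyclotomicProd_injOn.mono fun s hs m hm => (hs.1 m hm).trans_lt' two_pos
  rw [setOf_cyclotomicProduct_eq_image (by norm_num), hinj.ncard_image,
    ncard_multisets_totient_sum_six]
end

section
/- Let n ≥ 2, let v ∈ ℚ^n be nonzero, let C ∈ GL_n(ℚ) satisfy C(e_i) = e_i for 1 ≤ i ≤ n−1 and C(e_n) = e_n + v, and let Ω be a nondegenerate alternating bilinear form on ℚ^n invariant under C and under some γ ∈ GL_n(ℚ). If c denotes the coefficient of e_n in γ(v), then the coefficient of e_n in γ⁻¹(v) equals −c; equivalently, Ω(v, γ⁻¹(v)) = Ω(γ(v), v) = −c·Ω(v, e_n). -/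
open Matrix

/-- with `C` a transvection as below, `Ω` a nondegenerate alternating form
invariant under `C` and under `γ`, and `c` the coefficient of `e_n` in `γ(v)`, the
coefficient of `e_n` in `γ⁻¹(v)` is `-c`; equivalently
`Ω(v, γ⁻¹v) = Ω(γv, v) = -c·Ω(v, e_n)`. -/
theorem inverse_last_coefficient (n : ℕ) (hn : 2 ≤ n) (v : Fin n → ℚ) (hv : v ≠ 0)
    (C : GL (Fin n) ℚ)
    (hCi : ∀ i : Fin n, (i : ℕ) + 1 < n →
      (C : Matrix (Fin n) (Fin n) ℚ) *ᵥ Pi.single i 1 = Pi.single i 1)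
    (hCn : (C : Matrix (Fin n) (Fin n) ℚ) *ᵥ Pi.single (⟨n - 1, by omega⟩ : Fin n) 1
      = Pi.single (⟨n - 1, by omega⟩ : Fin n) 1 + v)
    (Ω : (Fin n → ℚ) →ₗ[ℚ] (Fin n → ℚ) →ₗ[ℚ] ℚ)
    (halt : ∀ x, Ω x x = 0)
    (hnd : ∀ x, (∀ y, Ω x y = 0) → x = 0)
    (hinvC : ∀ x y, Ω ((C : Matrix (Fin n) (Fin n) ℚ) *ᵥ x)
      ((C : Matrix (Fin n) (Fin n) ℚ) *ᵥ y) = Ω x y)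
    (γ : GL (Fin n) ℚ)
    (hinvγ : ∀ x y, Ω ((γ : Matrix (Fin n) (Fin n) ℚ) *ᵥ x)
      ((γ : Matrix (Fin n) (Fin n) ℚ) *ᵥ y) = Ω x y)
    (c : ℚ) (hc : c = ((γ : Matrix (Fin n) (Fin n) ℚ) *ᵥ v) ⟨n - 1, by omega⟩) :
    ((↑γ⁻¹ : Matrix (Fin n) (Fin n) ℚ) *ᵥ v) ⟨n - 1, by omega⟩ = -c ∧
    Ω v ((↑γ⁻¹ : Matrix (Fin n) (Fin n) ℚ) *ᵥ v)
      = Ω ((γ : Matrix (Fin n) (Fin n) ℚ) *ᵥ v) v ∧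
    Ω ((γ : Matrix (Fin n) (Fin n) ℚ) *ᵥ v) v
      = -c * Ω v (Pi.single (⟨n - 1, by omega⟩ : Fin n) 1) := by
  set L : Fin n := ⟨n - 1, by omega⟩ with hL
  -- skew-symmetry
  have hskew : ∀ x y, Ω x y = - Ω y x := by
    intro x y
    have h := halt (x + y)
    simp only [map_add, LinearMap.add_apply, halt] at h
    linarith
  -- Ω(e_i, v) = 0 for i ≠ L
  have hperp : ∀ i : Fin n, i ≠ L → Ω (Pi.single i 1) v = 0 := by
    intro i hi
    have hlt : (i : ℕ) + 1 < n := by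
      have := i.isLt
      have : (i : ℕ) ≠ n - 1 := fun h => hi (Fin.ext h)
      omega
    have h := hinvC (Pi.single i 1) (Pi.single L 1)
    rw [hCi i hlt, hCn, map_add] at h
    simpa using h
  -- key decomposition
  have hkey : ∀ x : Fin n → ℚ, Ω x v = x L * Ω (Pi.single L 1) v := by
    intro x
    have hsingle : ∀ i : Fin n, (fun j => if i = j then (1:ℚ) else 0) = Pi.single i 1 := by
      intro i; funext j; simp [Pi.single_apply, eq_comm]
    conv_lhs => rw [pi_eq_sum_univ x]
    simp only [map_sum, LinearMap.sum_apply, _root_.map_smul, LinearMap.smul_apply, smul_eq_mul,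
      hsingle]
    rw [Finset.sum_eq_single L]
    · intro i _ hi
      rw [hperp i hi, mul_zero]
    · intro h; exact absurd (Finset.mem_univ L) h
  set ω : ℚ := Ω (Pi.single L 1) v with hω
  have hω0 : ω ≠ 0 := by
    intro h0
    apply hv
    apply hnd
    intro y
    rw [hskew v y, hkey y, h0, mul_zero, neg_zero]
  -- γ γ⁻¹ v = v
  have hγγ : (γ : Matrix (Fin n) (Fin n) ℚ) *ᵥ ((↑γ⁻¹ : Matrix (Fin n) (Fin n) ℚ) *ᵥ v) = v := by
    rw [Matrix.mulVec_mulVec, ← Units.val_mul, mul_inv_cancel, Units.val_one, Matrix.one_mulVec]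
  have h2 : Ω v ((↑γ⁻¹ : Matrix (Fin n) (Fin n) ℚ) *ᵥ v)
      = Ω ((γ : Matrix (Fin n) (Fin n) ℚ) *ᵥ v) v := by
    calc Ω v ((↑γ⁻¹ : Matrix (Fin n) (Fin n) ℚ) *ᵥ v)
        = Ω ((γ : Matrix (Fin n) (Fin n) ℚ) *ᵥ v)
            ((γ : Matrix (Fin n) (Fin n) ℚ) *ᵥ ((↑γ⁻¹ : Matrix (Fin n) (Fin n) ℚ) *ᵥ v)) := by
          rw [hinvγ]
      _ = Ω ((γ : Matrix (Fin n) (Fin n) ℚ) *ᵥ v) v := by rw [hγγ]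
  have h3 : Ω ((γ : Matrix (Fin n) (Fin n) ℚ) *ᵥ v) v = c * ω := by
    rw [hkey, ← hc]
  have h1 : ((↑γ⁻¹ : Matrix (Fin n) (Fin n) ℚ) *ᵥ v) L = -c := by
    have := h2
    rw [hskew, hkey, h3] at this
    have hcc : -(((↑γ⁻¹ : Matrix (Fin n) (Fin n) ℚ) *ᵥ v) L * ω) = c * ω := this
    field_simp at hcc
    linarith [mul_right_cancel₀ hω0 (show (-(((↑γ⁻¹ : Matrix (Fin n) (Fin n) ℚ) *ᵥ v) L)) * ω = c * ω by linarith)]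
  refine ⟨h1, h2, ?_⟩
  rw [h3, hskew v, ← hω]
  ring
end

section
/- For every integer c with 1 ≤ |c| ≤ 2, the subgroup of SL₂(ℤ) generated by the two matrices [[1, −c], [0, 1]] and [[1, 0], [c, 1]] has finite index in SL₂(ℤ). -/
/-!
Let `sanov = ⟨T², L²⟩ ≤ Γ(2)`. Euclid's algorithm on the first row `(a, b)` of `A ∈ Γ(2)`, run with
the even steps `A ↦ A T^(2k)` and `A ↦ A L^(2k)`, reaches `b = 0`, where `A = ±L^(2j)`: since `a` is
odd and `b` even, `|a| ≠ |b|` and each step strictly shrinks `|a| + |b|`. Hence `Γ(2) ≤ ±sanov`,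
and `sanov` has finite index because `Γ(2)` does and the center `{±1}` is finite. When
`1 ≤ |c| ≤ 2` we have `c ∣ 2`, so `T²` and `L²` are powers of the generators `T^(-c)` and `L^c`.
-/

open Matrix.SpecialLinearGroup ModularGroup CongruenceSubgroup
open scoped MatrixGroups

theorem Int.exists_abs_add_mul_two_mul_le (x : ℤ) {y : ℤ} (hy : y ≠ 0) :
    ∃ k : ℤ, |x + y * (2 * k)| ≤ |y| := by
  have hr := Int.emod_nonneg x (mul_ne_zero two_ne_zero hy)
  have hr' : x % (2 * y) < 2 * |y| := by
    simpa [abs_mul] using Int.emod_lt x (mul_ne_zero two_ne_zero hy)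
  have hx := Int.mul_ediv_add_emod x (2 * y)
  rcases le_or_gt (x % (2 * y)) |y| with h | h
  · refine ⟨-(x / (2 * y)), ?_⟩
    rw [abs_le]; constructor <;> linarith
  · refine ⟨-(x / (2 * y)) - Int.sign y, ?_⟩
    have := Int.sign_mul_self_eq_abs y
    rw [abs_le]; constructor <;> nlinarith

theorem Subgroup.relIndex_sup_ne_zero_of_finite {G : Type*} [Group G] (H N : Subgroup G)
    [N.Normal] [Finite N] : H.relIndex (H ⊔ N) ≠ 0 := by
  rw [relIndex, index_ne_zero_iff_finite]
  refine Finite.of_surjective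
    (fun n : N ↦ QuotientGroup.mk (s := H.subgroupOf (H ⊔ N)) ⟨n, mem_sup_right n.2⟩) ?_
  rintro ⟨x, hx⟩
  obtain ⟨n, hn, h, hh, rfl⟩ := mem_sup_of_normal_left.mp (sup_comm H N ▸ hx)
  refine ⟨⟨n, hn⟩, QuotientGroup.eq.mpr ?_⟩
  simpa [mem_subgroupOf] using hh

theorem Subgroup.mul_mem_or_neg_mul_mem_iff {G : Type*} [Group G] [HasDistribNeg G]
    {H : Subgroup G} {A g : G} (hg : g ∈ H) : (A * g ∈ H ∨ -(A * g) ∈ H) ↔ (A ∈ H ∨ -A ∈ H) := by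
  rw [← neg_mul, mul_mem_cancel_right hg, mul_mem_cancel_right hg]

namespace ModularGroup

def L : SL(2, ℤ) := ⟨!![1, 0; 1, 1], by simp [Matrix.det_fin_two_of]⟩

theorem coe_L_zpow (n : ℤ) : ((L ^ n : SL(2, ℤ)) : Matrix (Fin 2) (Fin 2) ℤ) = !![1, 0; n, 1] := by
  induction n with
  | zero => simp_rw [zpow_zero, Matrix.SpecialLinearGroup.coe_one, Matrix.one_fin_two]
  | succ n h =>
    simp_rw [zpow_add_one, Matrix.SpecialLinearGroup.coe_mul, h, L, Matrix.mul_fin_two]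
    congrm !![_, _; ?_, _]
    push_cast; ring
  | pred n h =>
    simp_rw [zpow_sub_one, Matrix.SpecialLinearGroup.coe_mul, h,
      Matrix.SpecialLinearGroup.coe_inv, L, Matrix.adjugate_fin_two_of, Matrix.mul_fin_two]
    simp [sub_eq_add_neg]

/-- Sanov's subgroup, free on its two generators. -/
def sanov : Subgroup SL(2, ℤ) := Subgroup.closure {T ^ (2 : ℤ), L ^ (2 : ℤ)}

theorem T_zpow_mem_sanov {n : ℤ} (hn : Even n) : T ^ n ∈ sanov := by
  obtain ⟨k, rfl⟩ := hn
  rw [← two_mul, zpow_mul]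
  exact zpow_mem (Subgroup.subset_closure (Set.mem_insert _ _)) k

theorem L_zpow_mem_sanov {n : ℤ} (hn : Even n) : L ^ n ∈ sanov := by
  obtain ⟨k, rfl⟩ := hn
  rw [← two_mul, zpow_mul]
  exact zpow_mem (Subgroup.subset_closure (Set.mem_insert_of_mem _ (Set.mem_singleton _))) k

theorem sanov_le_Gamma_two : sanov ≤ Γ(2) := by
  rw [sanov, Subgroup.closure_le]
  rintro _ (rfl | rfl) <;> rw [SetLike.mem_coe, Gamma_mem]
  · simp only [coe_T_zpow]; decide
  · simp only [coe_L_zpow]; decide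

theorem odd_even_even_of_mem_Gamma_two {A : SL(2, ℤ)} (hA : A ∈ Γ(2)) :
    Odd (A 0 0) ∧ Even (A 0 1) ∧ Even (A 1 0) := by
  obtain ⟨ha, hb, hc, -⟩ := Gamma_mem.mp hA
  simp only [ZMod.intCast_eq_one_iff_odd, ZMod.intCast_zmod_eq_zero_iff_dvd, Nat.cast_ofNat]
    at ha hb hc
  exact ⟨ha, even_iff_two_dvd.mpr hb, even_iff_two_dvd.mpr hc⟩

theorem mem_sanov_or_neg_mem_of_mem_Gamma_two_of_apply_zero_one_eq_zero {A : SL(2, ℤ)}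
    (hA : A ∈ Γ(2)) (hb : A 0 1 = 0) : A ∈ sanov ∨ -A ∈ sanov := by
  have hc := (odd_even_even_of_mem_Gamma_two hA).2.2
  have hdet := A.det_coe
  rw [Matrix.det_fin_two, hb, zero_mul, sub_zero] at hdet
  rcases Int.eq_one_or_neg_one_of_mul_eq_one' hdet with ⟨ha, hd⟩ | ⟨ha, hd⟩
  · left
    convert L_zpow_mem_sanov hc
    ext i j; fin_cases i <;> fin_cases j <;> simp [coe_L_zpow, ha, hb, hd]
  · right
    convert L_zpow_mem_sanov hc.neg
    ext i j; fin_cases i <;> fin_cases j <;> simp [coe_L_zpow, ha, hb, hd]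

theorem mem_sanov_or_neg_mem_of_mem_Gamma_two {A : SL(2, ℤ)} (hA : A ∈ Γ(2)) :
    A ∈ sanov ∨ -A ∈ sanov := by
  induction hn : (A 0 0).natAbs + (A 0 1).natAbs using Nat.strong_induction_on generalizing A with
  | _ n ih =>
  obtain ⟨ha, hb, -⟩ := odd_even_even_of_mem_Gamma_two hA
  by_cases hb0 : A 0 1 = 0
  · exact mem_sanov_or_neg_mem_of_mem_Gamma_two_of_apply_zero_one_eq_zero hA hb0
  have ha0 : A 0 0 ≠ 0 := by rintro h; simp [h] at ha
  have hab : (A 0 0).natAbs ≠ (A 0 1).natAbs := by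
    rw [Int.odd_iff] at ha; rw [Int.even_iff] at hb; omega
  have step : ∀ g ∈ sanov, ((A * g) 0 0).natAbs + ((A * g) 0 1).natAbs < n →
      A ∈ sanov ∨ -A ∈ sanov := fun g hg hlt ↦
    (Subgroup.mul_mem_or_neg_mul_mem_iff hg).mp (ih _ hlt (mul_mem hA (sanov_le_Gamma_two hg)) rfl)
  rcases hab.lt_or_gt with hlt | hlt
  · obtain ⟨k, hk⟩ := Int.exists_abs_add_mul_two_mul_le (A 0 1) ha0
    refine step _ (T_zpow_mem_sanov (even_two_mul k)) ?_
    simp only [Int.abs_eq_natAbs] at hk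
    simp [coe_T_zpow, Matrix.mul_apply, Fin.sum_univ_two]
    omega
  · obtain ⟨k, hk⟩ := Int.exists_abs_add_mul_two_mul_le (A 0 0) hb0
    refine step _ (L_zpow_mem_sanov (even_two_mul k)) ?_
    simp only [Int.abs_eq_natAbs] at hk
    simp [coe_L_zpow, Matrix.mul_apply, Fin.sum_univ_two]
    omega

instance : Finite (Subgroup.center SL(2, ℤ)) :=
  Finite.of_equiv _ (center_equiv_rootsOfUnity' (0 : Fin 2)).symm.toEquiv

theorem Gamma_two_le_sanov_sup_center : Γ(2) ≤ sanov ⊔ Subgroup.center SL(2, ℤ) := by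
  intro A hA
  rcases mem_sanov_or_neg_mem_of_mem_Gamma_two hA with h | h
  · exact Subgroup.mem_sup_left h
  · have h1 : (-1 : SL(2, ℤ)) ∈ Subgroup.center SL(2, ℤ) :=
      Subgroup.mem_center_iff.mpr fun g ↦ (Commute.neg_one_left g).eq.symm
    simpa using Subgroup.mul_mem_sup h h1

instance sanov_finiteIndex : sanov.FiniteIndex := by
  have := Subgroup.finiteIndex_of_le (H := Γ(2)) Gamma_two_le_sanov_sup_center
  rw [Subgroup.finiteIndex_iff, ← Subgroup.relIndex_mul_index le_sup_left]
  exact mul_ne_zero (Subgroup.relIndex_sup_ne_zero_of_finite _ _) (Subgroup.finiteIndex_iff.mp this)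

end ModularGroup

/-- for every integer `c` with `1 ≤ |c| ≤ 2`, the subgroup of `SL₂(ℤ)`
generated by `[[1, -c], [0, 1]]` and `[[1, 0], [c, 1]]` has finite index in `SL₂(ℤ)`. -/
theorem finite_index_in_SL2 (c : ℤ) (h1 : 1 ≤ |c|) (h2 : |c| ≤ 2) :
    (Subgroup.closure
      {(⟨!![1, -c; 0, 1], by simp [Matrix.det_fin_two_of]⟩ :
          Matrix.SpecialLinearGroup (Fin 2) ℤ),
       (⟨!![1, 0; c, 1], by simp [Matrix.det_fin_two_of]⟩ :
          Matrix.SpecialLinearGroup (Fin 2) ℤ)} :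
      Subgroup (Matrix.SpecialLinearGroup (Fin 2) ℤ)).index ≠ 0 := by
  obtain ⟨m, hm⟩ : c ∣ 2 := by
    rw [abs_le] at h2
    rw [le_abs'] at h1
    obtain rfl | rfl | rfl | rfl : c = 1 ∨ c = -1 ∨ c = 2 ∨ c = -2 := by omega
    all_goals norm_num
  refine (Subgroup.finiteIndex_of_le (H := sanov) (Subgroup.closure_le _ |>.mpr ?_)).index_ne_zero
  rintro _ (rfl | rfl)
  · rw [SetLike.mem_coe, hm, show c * m = -c * -m by ring, zpow_mul]
    exact zpow_mem (Subgroup.subset_closure (.inl (Subtype.ext (coe_T_zpow (-c))))) _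
  · rw [SetLike.mem_coe, hm, zpow_mul]
    exact zpow_mem (Subgroup.subset_closure (.inr (Subtype.ext (coe_L_zpow c)))) _
end

section
/- Let f(x) = (x−1)^6 and g(x) = (x²+x+1)²(x²−x+1), let A, B ∈ GL₆(ℤ) be their companion matrices, and let v = (A⁻¹B − I)(e₆). Then v = (−7, 13, −21, 13, −7, 0), and the matrix γ = A²·B·A⁻¹·B⁴·A satisfies: the coefficient of e₆ in γ(v) lies in {1, −1, 2, −2}, and the three vectors v, γ(v), γ⁻¹(v) are linearly independent over ℚ. -/
open Matrix Polynomial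

/-- The companion matrix of a monic polynomial `p` of degree `n`: it sends
`e_i ↦ e_{i+1}` for `1 ≤ i ≤ n-1` (zero-indexed: column `j` is `e_{j+1}` when `j+1 < n`),
and `e_n ↦ -(c_0 e_1 + c_1 e_2 + ⋯ + c_{n-1} e_n)`. -/
def companionMat (n : ℕ) (p : Polynomial ℤ) : Matrix (Fin n) (Fin n) ℤ :=
  Matrix.of fun i j =>
    if (j : ℕ) + 1 < n then (if (i : ℕ) = (j : ℕ) + 1 then 1 else 0) else -p.coeff (i : ℕ)

/-!
Everything is a finite integer computation once the two companion matrices are written out. The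
coefficients of `(X - 1)^6` and `(X² + X + 1)²(X² - X + 1)` give `A` and `B` entrywise, `A⁻¹` and
`γ⁻¹` are identified by exhibiting right inverses, and `v`, `γ v`, `γ⁻¹ v` are then explicit.
Linear independence follows from a nonzero `3 × 3` minor, that of the first three coordinates.
-/

theorem companionMat_eq_of_coeff {n : ℕ} {p : ℤ[X]} {c : Fin n → ℤ}
    (h : ∀ k : Fin n, p.coeff k = c k) :
    companionMat n p =
      Matrix.of fun (i j : Fin n) =>
        if (j : ℕ) + 1 < n then (if (i : ℕ) = (j : ℕ) + 1 then 1 else 0) else -c i := by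
  ext i j
  simp only [companionMat, of_apply, h]

theorem linearIndependent_of_det_submatrix_ne_zero {K ι : Type*} [Field K] {m : ℕ}
    (v : Fin m → ι → K) (r : Fin m → ι) (h : ((of v).submatrix id r).det ≠ 0) :
    LinearIndependent K v := by
  apply LinearIndependent.of_comp (LinearMap.funLeft K K r)
  change LinearIndependent K ((of v).submatrix id r).row
  rwa [linearIndependent_rows_iff_isUnit, isUnit_iff_isUnit_det, isUnit_iff_ne_zero]

theorem coeff_X_sub_one_pow_six (k : Fin 6) :
    ((X - 1 : ℤ[X]) ^ 6).coeff k = ![1, -6, 15, -20, 15, -6] k := by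
  rw [sub_eq_add_neg, ← C_1, ← C_neg, coeff_X_add_C_pow]
  fin_cases k <;> simp [Nat.choose]

theorem coeff_cyclotomic_three_sq_mul_cyclotomic_six (k : Fin 6) :
    ((X ^ 2 + X + 1) ^ 2 * (X ^ 2 - X + 1) : ℤ[X]).coeff k = ![1, 1, 2, 1, 2, 1] k := by
  have : ((X ^ 2 + X + 1) ^ 2 * (X ^ 2 - X + 1) : ℤ[X]) =
      X ^ 6 + X ^ 5 + 2 * X ^ 4 + X ^ 3 + 2 * X ^ 2 + X + 1 := by ring
  rw [this]
  fin_cases k <;> simp [coeff_X, coeff_one]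

def matA : Matrix (Fin 6) (Fin 6) ℤ := !![
  0, 0, 0, 0, 0, -1;
  1, 0, 0, 0, 0, 6;
  0, 1, 0, 0, 0, -15;
  0, 0, 1, 0, 0, 20;
  0, 0, 0, 1, 0, -15;
  0, 0, 0, 0, 1, 6]

def matB : Matrix (Fin 6) (Fin 6) ℤ := !![
  0, 0, 0, 0, 0, -1;
  1, 0, 0, 0, 0, -1;
  0, 1, 0, 0, 0, -2;
  0, 0, 1, 0, 0, -1;
  0, 0, 0, 1, 0, -2;
  0, 0, 0, 0, 1, -1]

def matAInv : Matrix (Fin 6) (Fin 6) ℤ := !![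
  6, 1, 0, 0, 0, 0;
  -15, 0, 1, 0, 0, 0;
  20, 0, 0, 1, 0, 0;
  -15, 0, 0, 0, 1, 0;
  6, 0, 0, 0, 0, 1;
  -1, 0, 0, 0, 0, 0]

def matGamma : Matrix (Fin 6) (Fin 6) ℤ := !![
  -6, 37, -24, -42, 66, -44;
  35, -214, 138, 243, -381, 243;
  -84, 506, -323, -575, 898, -526;
  105, -628, 397, 714, -1110, 600;
  -70, 406, -252, -461, 714, -336;
  21, -124, 74, 140, -213, 82]

def matGammaInv : Matrix (Fin 6) (Fin 6) ℤ := !![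
  1016, 310, 75, 13, -5, -8;
  -287, -176, -96, -28, 14, 14;
  952, 394, 159, 42, -19, -22;
  70, -84, -84, -28, 15, 14;
  644, 212, 61, 13, -5, -7;
  0, -7, -6, -2, 1, 1]

theorem companionMat_X_sub_one_pow_six : companionMat 6 ((X - 1) ^ 6) = matA := by
  rw [companionMat_eq_of_coeff coeff_X_sub_one_pow_six]
  decide

theorem companionMat_cyclotomic_three_sq_mul_cyclotomic_six :
    companionMat 6 ((X ^ 2 + X + 1) ^ 2 * (X ^ 2 - X + 1)) = matB := by
  rw [companionMat_eq_of_coeff coeff_cyclotomic_three_sq_mul_cyclotomic_six]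
  decide

theorem matA_mul_matAInv : matA * matAInv = 1 := by decide

theorem word_eq_matGamma : matA ^ 2 * matB * matAInv * matB ^ 4 * matA = matGamma := by decide

theorem matGamma_mul_matGammaInv : matGamma * matGammaInv = 1 := by decide

/-- for γ = A²BA⁻¹B⁴A the coefficient of e₆ in γ(v) lies in {1, -1, 2, -2} and v, γ(v), γ⁻¹(v) are linearly independent over ℚ. -/
theorem entry17_certificate (f g : Polynomial ℤ)
    (hf : f = (Polynomial.X - 1) ^ 6)
    (hg : g = (Polynomial.X ^ 2 + Polynomial.X + 1) ^ 2 * (Polynomial.X ^ 2 - Polynomial.X + 1))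
    (A B : GL (Fin 6) ℤ)
    (hA : (A : Matrix (Fin 6) (Fin 6) ℤ) = companionMat 6 f)
    (hB : (B : Matrix (Fin 6) (Fin 6) ℤ) = companionMat 6 g)
    (v : Fin 6 → ℤ)
    (hv : v = ((A⁻¹ * B : GL (Fin 6) ℤ) : Matrix (Fin 6) (Fin 6) ℤ) *ᵥ
      Pi.single (5 : Fin 6) 1 - Pi.single (5 : Fin 6) 1)
    (γ : GL (Fin 6) ℤ) (hγ : γ = A ^ 2 * B * A⁻¹ * B ^ 4 * A) :
    v = ![-7, 13, -21, 13, -7, 0] ∧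
    ((γ : Matrix (Fin 6) (Fin 6) ℤ) *ᵥ v) 5 ∈ ({1, -1, 2, -2} : Set ℤ) ∧
    LinearIndependent ℚ
      ![(fun i => (v i : ℚ)),
        (fun i => (((γ : Matrix (Fin 6) (Fin 6) ℤ) *ᵥ v) i : ℚ)),
        (fun i => (((↑γ⁻¹ : Matrix (Fin 6) (Fin 6) ℤ) *ᵥ v) i : ℚ))] := by
  rw [hf, companionMat_X_sub_one_pow_six] at hA
  rw [hg, companionMat_cyclotomic_three_sq_mul_cyclotomic_six] at hB
  have hAinv : ((A⁻¹ : GL (Fin 6) ℤ) : Matrix (Fin 6) (Fin 6) ℤ) = matAInv :=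
    Units.inv_eq_of_mul_eq_one_right (hA ▸ matA_mul_matAInv)
  have hγ' : (γ : Matrix (Fin 6) (Fin 6) ℤ) = matGamma := by
    rw [hγ, ← word_eq_matGamma]
    simp only [Units.val_mul, Units.val_pow_eq_pow_val, hA, hB, hAinv]
  have hγinv : ((γ⁻¹ : GL (Fin 6) ℤ) : Matrix (Fin 6) (Fin 6) ℤ) = matGammaInv :=
    Units.inv_eq_of_mul_eq_one_right (hγ' ▸ matGamma_mul_matGammaInv)
  have hv' : v = ![-7, 13, -21, 13, -7, 0] := by
    rw [hv, Units.val_mul, hAinv, hB]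
    decide
  have hγv : matGamma *ᵥ v = ![19, -99, 188, -184, 69, -2] := by rw [hv']; decide
  have hγinvv : matGammaInv *ᵥ v = ![-4453, 1275, -4202, -287, -2829, 2] := by rw [hv']; decide
  refine ⟨hv', ?_, ?_⟩
  · rw [hγ', hγv]
    simp
  · rw [hγ', hγinv, hγv, hγinvv, hv']
    refine linearIndependent_of_det_submatrix_ne_zero _ ![0, 1, 2] ?_
    norm_num [det_fin_three, cons_val_two]
end

section
/- Let f(x) = (x−1)^6 and g(x) = (x⁴+x³+x²+x+1)(x²−x+1), let A, B ∈ GL₆(ℤ) be their companion matrices, and let v = (A⁻¹B − I)(e₆). Then v = (−6, 14, −21, 14, −6, 0), and the matrix γ = A·B⁵ satisfies: the coefficient of e₆ in γ(v) lies in {1, −1, 2, −2}, and the three vectors v, γ(v), γ⁻¹(v) are linearly independent over ℚ. -/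
open Matrix Polynomial

private def MA : Matrix (Fin 6) (Fin 6) ℤ :=
  !![0,0,0,0,0,-1; 1,0,0,0,0,6; 0,1,0,0,0,-15; 0,0,1,0,0,20; 0,0,0,1,0,-15; 0,0,0,0,1,6]
private def MB : Matrix (Fin 6) (Fin 6) ℤ :=
  !![0,0,0,0,0,-1; 1,0,0,0,0,0; 0,1,0,0,0,-1; 0,0,1,0,0,-1; 0,0,0,1,0,-1; 0,0,0,0,1,0]
private def MAi : Matrix (Fin 6) (Fin 6) ℤ :=
  !![6,1,0,0,0,0; -15,0,1,0,0,0; 20,0,0,1,0,0; -15,0,0,0,1,0; 6,0,0,0,0,1; -1,0,0,0,0,0]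
private def Mg : Matrix (Fin 6) (Fin 6) ℤ :=
  !![-1,0,1,1,0,-2; 6,-1,-6,-5,1,12; -15,0,14,15,1,-29; 20,-1,-20,-20,1,41; -15,-1,14,16,1,-29; 6,-1,-7,-6,2,13]
private def Mgi : Matrix (Fin 6) (Fin 6) ℤ :=
  !![6,2,0,-1,-1,0; -15,1,2,0,-1,-1; 20,1,1,1,-1,-1; -15,1,1,0,0,-1; 6,1,1,0,-1,0; -1,0,1,1,0,-1]

private lemma MA_MAi : MA * MAi = 1 := by decide
private lemma Mg_eq : MA * MB ^ 5 = Mg := by decide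
private lemma Mg_Mgi : Mg * Mgi = 1 := by decide

private lemma companionMat_eq (p : Polynomial ℤ) (c : Fin 6 → ℤ)
    (h : ∀ i : Fin 6, p.coeff (i : ℕ) = c i) :
    companionMat 6 p = Matrix.of fun i j : Fin 6 =>
      if (j : ℕ) + 1 < 6 then (if (i : ℕ) = (j : ℕ) + 1 then 1 else 0) else -c i := by
  ext i j
  simp only [companionMat, Matrix.of_apply, h i]

/-- for γ = AB⁵ the coefficient of e₆ in γ(v) lies in {1, -1, 2, -2} and v, γ(v), γ⁻¹(v) are linearly independent over ℚ. -/
theorem entry32_certificate (f g : Polynomial ℤ)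
    (hf : f = (Polynomial.X - 1) ^ 6)
    (hg : g = (Polynomial.X ^ 4 + Polynomial.X ^ 3 + Polynomial.X ^ 2 + Polynomial.X + 1) * (Polynomial.X ^ 2 - Polynomial.X + 1))
    (A B : GL (Fin 6) ℤ)
    (hA : (A : Matrix (Fin 6) (Fin 6) ℤ) = companionMat 6 f)
    (hB : (B : Matrix (Fin 6) (Fin 6) ℤ) = companionMat 6 g)
    (v : Fin 6 → ℤ)
    (hv : v = ((A⁻¹ * B : GL (Fin 6) ℤ) : Matrix (Fin 6) (Fin 6) ℤ) *ᵥ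
      Pi.single (5 : Fin 6) 1 - Pi.single (5 : Fin 6) 1)
    (γ : GL (Fin 6) ℤ) (hγ : γ = A * B ^ 5) :
    v = ![-6, 14, -21, 14, -6, 0] ∧
    ((γ : Matrix (Fin 6) (Fin 6) ℤ) *ᵥ v) 5 ∈ ({1, -1, 2, -2} : Set ℤ) ∧
    LinearIndependent ℚ
      ![(fun i => (v i : ℚ)),
        (fun i => (((γ : Matrix (Fin 6) (Fin 6) ℤ) *ᵥ v) i : ℚ)),
        (fun i => (((↑γ⁻¹ : Matrix (Fin 6) (Fin 6) ℤ) *ᵥ v) i : ℚ))] := by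
  have hf' : f = C 1 * X ^ 6 + C (-6) * X ^ 5 + C 15 * X ^ 4 + C (-20) * X ^ 3
      + C 15 * X ^ 2 + C (-6) * X + C 1 := by
    rw [hf]; simp only [C_1, map_neg, map_ofNat]; ring
  have hg' : g = C 1 * X ^ 6 + C 1 * X ^ 4 + C 1 * X ^ 3 + C 1 * X ^ 2 + C 1 := by
    rw [hg]; simp only [C_1]; ring
  have hA' : (A : Matrix (Fin 6) (Fin 6) ℤ) = MA := by
    rw [hA, companionMat_eq f ![1,-6,15,-20,15,-6] (by
      intro i
      fin_cases i <;>
        norm_num [hf', coeff_one, coeff_C_mul, coeff_X_pow, coeff_X])]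
    decide
  have hB' : (B : Matrix (Fin 6) (Fin 6) ℤ) = MB := by
    rw [hB, companionMat_eq g ![1,0,1,1,1,0] (by
      intro i
      fin_cases i <;>
        norm_num [hg', coeff_one, coeff_C_mul, coeff_X_pow, coeff_X])]
    decide
  have hAi : ((A⁻¹ : GL (Fin 6) ℤ) : Matrix (Fin 6) (Fin 6) ℤ) = MAi := by
    rw [Matrix.coe_units_inv, hA']
    exact Matrix.inv_eq_right_inv MA_MAi
  have hγ' : ((γ : GL (Fin 6) ℤ) : Matrix (Fin 6) (Fin 6) ℤ) = Mg := by
    rw [hγ, Units.val_mul, Units.val_pow_eq_pow_val, hA', hB', Mg_eq]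
  have hγi : ((γ⁻¹ : GL (Fin 6) ℤ) : Matrix (Fin 6) (Fin 6) ℤ) = Mgi := by
    rw [Matrix.coe_units_inv, hγ']
    exact Matrix.inv_eq_right_inv Mg_Mgi
  have hv' : v = ![-6, 14, -21, 14, -6, 0] := by
    have hsingle : (Pi.single (5 : Fin 6) 1 : Fin 6 → ℤ) = ![0,0,0,0,0,1] := by
      funext i; fin_cases i <;> decide
    rw [hv, Units.val_mul, hAi, hB', hsingle]
    decide
  refine ⟨hv', ?_, ?_⟩
  · rw [hγ', hv']
    have h5 : (Mg *ᵥ ![-6, 14, -21, 14, -6, 0]) 5 = 1 := by decide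
    rw [h5]
    left; rfl
  · rw [hγ', hγi, hv']
    have e1 : Mg *ᵥ ![-6, 14, -21, 14, -6, 0] = ![-1, 0, 0, 0, 0, 1] := by decide
    have e2 : Mgi *ᵥ ![-6, 14, -21, 14, -6, 0] = ![-16, 68, -107, 83, -37, -1] := by decide
    rw [e1, e2]
    rw [Fintype.linearIndependent_iff]
    intro c hc
    have h0 := congrFun hc 0
    have h1 := congrFun hc 1
    have h2 := congrFun hc 2
    simp [Fin.sum_univ_three] at h0 h1 h2
    intro i
    fin_cases i <;> simp <;> linarith
end

section
/- Let f(x) = (x−1)^6 and g(x) = (x+1)^6, let A, B ∈ GL₆(ℤ) be their companion matrices, and let v = (A⁻¹B − I)(e₆). Then v = (−12, 0, −40, 0, −12, 0), every coordinate of v is divisible by 4, and consequently for every element γ of the subgroup of GL₆(ℤ) generated by A and B, the coefficient of e₆ in γ(v) does not lie in {1, −1, 2, −2}; in particular no γ in this group satisfies the hypotheses of the arithmeticity criterion. -/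
/-! Since `A (A⁻¹ B - I) e₆ = (B - A) e₆`, and two companion matrices differ only in their last
column, `A v` is the coefficient vector of `f - g = -12x⁵ - 40x³ - 12x`. As `A` shifts every
vector with vanishing last coordinate down by one, this pins down `v = (-12, 0, -40, 0, -12, 0)`.
All its coordinates are divisible by 4, hence so are those of `γ v` for every integral matrix `γ`. -/

open Matrix Polynomial

theorem companionMat_sub_mulVec_single {n : ℕ} (p q : ℤ[X]) (j : Fin n) (hj : (j : ℕ) + 1 = n) :
    (companionMat n q - companionMat n p) *ᵥ Pi.single j 1 = fun i : Fin n => (p - q).coeff i := by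
  ext i
  simp [companionMat, hj, neg_add_eq_sub]

theorem companionMat_six_mulVec (p : ℤ[X]) (a₀ a₁ a₂ a₃ a₄ : ℤ) :
    companionMat 6 p *ᵥ ![a₀, a₁, a₂, a₃, a₄, 0] = ![0, a₀, a₁, a₂, a₃, a₄] := by
  ext i
  fin_cases i <;> simp [companionMat, mulVec, dotProduct, Fin.sum_univ_six]

theorem coeff_X_sub_one_pow_six_sub_X_add_one_pow_six :
    (fun i : Fin 6 => ((X - 1) ^ 6 - (X + 1) ^ 6 : ℤ[X]).coeff i) = ![0, -12, 0, -40, 0, -12] := by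
  have h : ((X - 1) ^ 6 - (X + 1) ^ 6 : ℤ[X]) = -(12 * X ^ 5 + 40 * X ^ 3 + 12 * X) := by ring
  ext i
  fin_cases i <;> simp [h, coeff_X, coeff_X_pow]

theorem Matrix.GeneralLinearGroup.inv_mul_mulVec_sub_eq {m R : Type*} [Fintype m] [DecidableEq m]
    [CommRing R] {A B : GL m R} {e w : m → R}
    (h : (A : Matrix m m R) *ᵥ w = (B - A : Matrix m m R) *ᵥ e) :
    ((A⁻¹ * B : GL m R) : Matrix m m R) *ᵥ e - e = w := by
  calc ((A⁻¹ * B : GL m R) : Matrix m m R) *ᵥ e - e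
      = ((A⁻¹ : GL m R) : Matrix m m R) *ᵥ ((B - A : Matrix m m R) *ᵥ e) := by
        rw [mulVec_mulVec, Matrix.mul_sub, Units.inv_mul, sub_mulVec, one_mulVec, Units.val_mul]
    _ = w := by rw [← h, mulVec_mulVec, Units.inv_mul, one_mulVec]

theorem dvd_mulVec_apply {m n R : Type*} [Fintype n] [CommSemiring R] {a : R} {v : n → R}
    (h : ∀ i, a ∣ v i) (M : Matrix m n R) (i : m) : a ∣ (M *ᵥ v) i :=
  Finset.dvd_sum fun j _ => dvd_mul_of_dvd_right (h j) _

theorem notMem_of_four_dvd {x : ℤ} (h : 4 ∣ x) : x ∉ ({1, -1, 2, -2} : Set ℤ) := by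
  rintro (rfl | rfl | rfl | rfl) <;> norm_num at h

/-- for f = (x-1)⁶, g = (x+1)⁶ we have v = (-12, 0, -40, 0, -12, 0), every
coordinate of v is divisible by 4, hence for every γ in the group generated by A and B the
coefficient of e₆ in γ(v) is not in {1, -1, 2, -2}; in particular no γ in this group
satisfies the hypotheses of the arithmeticity criterion. -/
theorem no_certificate_entry_one (f g : Polynomial ℤ)
    (hf : f = (Polynomial.X - 1) ^ 6)
    (hg : g = (Polynomial.X + 1) ^ 6)
    (A B : GL (Fin 6) ℤ)
    (hA : (A : Matrix (Fin 6) (Fin 6) ℤ) = companionMat 6 f)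
    (hB : (B : Matrix (Fin 6) (Fin 6) ℤ) = companionMat 6 g)
    (v : Fin 6 → ℤ)
    (hv : v = ((A⁻¹ * B : GL (Fin 6) ℤ) : Matrix (Fin 6) (Fin 6) ℤ) *ᵥ
      Pi.single (5 : Fin 6) 1 - Pi.single (5 : Fin 6) 1) :
    v = ![-12, 0, -40, 0, -12, 0] ∧
    (∀ i : Fin 6, (4 : ℤ) ∣ v i) ∧
    (∀ γ ∈ Subgroup.closure {A, B},
      ((γ : Matrix (Fin 6) (Fin 6) ℤ) *ᵥ v) 5 ∉ ({1, -1, 2, -2} : Set ℤ)) ∧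
    ¬ ∃ γ ∈ Subgroup.closure {A, B},
      ((γ : Matrix (Fin 6) (Fin 6) ℤ) *ᵥ v) 5 ∈ ({1, -1, 2, -2} : Set ℤ) ∧
      LinearIndependent ℚ
        ![(fun i => (v i : ℚ)),
          (fun i => (((γ : Matrix (Fin 6) (Fin 6) ℤ) *ᵥ v) i : ℚ)),
          (fun i => (((↑γ⁻¹ : Matrix (Fin 6) (Fin 6) ℤ) *ᵥ v) i : ℚ))] := by
  have hv_eq : v = ![-12, 0, -40, 0, -12, 0] := by
    rw [hv]
    refine GeneralLinearGroup.inv_mul_mulVec_sub_eq ?_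
    rw [hA, hB, companionMat_sub_mulVec_single f g 5 rfl, hf, hg,
      coeff_X_sub_one_pow_six_sub_X_add_one_pow_six, companionMat_six_mulVec]
  have h4 : ∀ i, (4 : ℤ) ∣ v i := by
    rw [hv_eq]
    decide
  have hγ (γ : GL (Fin 6) ℤ) :
      ((γ : Matrix (Fin 6) (Fin 6) ℤ) *ᵥ v) 5 ∉ ({1, -1, 2, -2} : Set ℤ) :=
    notMem_of_four_dvd (dvd_mulVec_apply h4 _ 5)
  exact ⟨hv_eq, h4, fun γ _ => hγ γ, fun ⟨γ, _, hmem, _⟩ => hγ γ hmem⟩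
end
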